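/- arXiv:2310.17350 — 3 statements merged into one kernel-verified Lean document; each statement's English description precedes it below -/
import Mathlib

section
/- Let H be a real Hilbert space, let 0<α≤1 and 0<ν≤1, let t>0, and let φ:(0,t)→H be square-integrable. Then 𝓘^α(‖𝓘φ‖²)(t) ≤ ω_{2−ν}(t) · 𝓘^{1+α−ν}(‖𝓘^ν φ‖²)(t), where ‖𝓘φ‖² denotes the scalar function s ↦ ‖(𝓘φ)(s)‖² and ‖𝓘^ν φ‖² denotes s ↦ ‖(𝓘^ν φ)(s)‖². -/
open MeasureTheory intervalIntegral

/-- The Riemann–Liouville kernel `ω_α(t) = t^(α-1)/Γ(α)`. -/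
noncomputable def rlKernel (α t : ℝ) : ℝ := t ^ (α - 1) / Real.Gamma α

/-- The Riemann–Liouville fractional integral `(𝓘^α φ)(t) = ∫₀ᵗ ω_α(t-s) φ(s) ds`. -/
noncomputable def fracInt {H : Type*} [NormedAddCommGroup H] [NormedSpace ℝ H]
    (α : ℝ) (φ : ℝ → H) (t : ℝ) : H :=
  ∫ s in (0:ℝ)..t, rlKernel α (t - s) • φ s

/-!
For `ν < 1` the semigroup law gives `𝓘φ = 𝓘^(1-ν) (𝓘^ν φ)`. Cauchy–Schwarz against the weight
`ω_(1-ν)(s - ·)`, whose mass on `(0, s)` is `ω_(2-ν)(s) ≤ ω_(2-ν)(t)`, then yields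
`‖𝓘φ(s)‖² ≤ ω_(2-ν)(t) · 𝓘^(1-ν)(‖𝓘^ν φ‖²)(s)`, and applying `𝓘^α` together with the semigroup law
`𝓘^α 𝓘^(1-ν) = 𝓘^(1+α-ν)` gives the claim. The estimates are carried out for Lebesgue integrals of
`ℝ≥0∞`-valued functions, where Fubini needs no integrability; since `φ ∈ L²`, the right-hand side
is finite, which allows passing back to the real integrals. For `ν = 1` both sides coincide.
-/

open Set ENNReal

@[fun_prop]
lemma measurable_rlKernel (a : ℝ) : Measurable (rlKernel a) := by
  unfold rlKernel; fun_prop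

lemma rlKernel_one (x : ℝ) : rlKernel 1 x = 1 := by
  simp [rlKernel]

lemma rlKernel_nonneg {a x : ℝ} (ha : 0 < a) (hx : 0 ≤ x) : 0 ≤ rlKernel a x :=
  div_nonneg (Real.rpow_nonneg hx _) (Real.Gamma_pos_of_pos ha).le

lemma rlKernel_le_rlKernel {a x y : ℝ} (ha : 1 ≤ a) (hx : 0 ≤ x) (hxy : x ≤ y) :
    rlKernel a x ≤ rlKernel a y :=
  div_le_div_of_nonneg_right (Real.rpow_le_rpow hx hxy (by linarith))
    (Real.Gamma_pos_of_pos (by linarith)).le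

lemma lintegral_rpow_mul_one_sub_rpow {a b : ℝ} (ha : 0 < a) (hb : 0 < b) :
    ∫⁻ x in Ioo 0 1, ENNReal.ofReal (x ^ (a - 1) * (1 - x) ^ (b - 1))
      = ENNReal.ofReal (ProbabilityTheory.beta a b) := by
  have hβ := ProbabilityTheory.beta_pos ha hb
  have h := ProbabilityTheory.lintegral_betaPDF_eq_one ha hb
  simp_rw [ProbabilityTheory.lintegral_betaPDF, mul_assoc,
    ENNReal.ofReal_mul (one_div_pos.2 hβ).le] at h
  rw [lintegral_const_mul' _ _ ofReal_ne_top,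
    ← ENNReal.eq_div_iff (by simpa using hβ) ofReal_ne_top] at h
  rw [h, ENNReal.ofReal_div_of_pos hβ]
  simp

-- Substituting `r = u + (s - u) x` reduces this to the Beta integral.
lemma lintegral_rlKernel_mul_rlKernel {a b u s : ℝ} (ha : 0 < a) (hb : 0 < b) (hus : u < s) :
    ∫⁻ r in Ioo u s, ENNReal.ofReal (rlKernel a (s - r) * rlKernel b (r - u))
      = ENNReal.ofReal (rlKernel (a + b) (s - u)) := by
  set c := s - u
  have hc : 0 < c := sub_pos.2 hus
  have himage : (c * · + u) '' Ioo 0 1 = Ioo u s := by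
    rw [image_affine_Ioo hc]; simp [c]
  rw [← himage, lintegral_image_eq_lintegral_abs_deriv_mul measurableSet_Ioo
    (fun x _ => (((hasDerivAt_id' x).const_mul c).add_const u).hasDerivWithinAt)
    (fun x _ y _ h => mul_left_cancel₀ hc.ne' (add_right_cancel h))]
  have hpt : ∀ x ∈ Ioo (0:ℝ) 1, ENNReal.ofReal |c * 1|
      * ENNReal.ofReal (rlKernel a (s - (c * x + u)) * rlKernel b (c * x + u - u))
        = ENNReal.ofReal (c ^ (a + b - 1) / (Real.Gamma a * Real.Gamma b))
          * ENNReal.ofReal (x ^ (b - 1) * (1 - x) ^ (a - 1)) := by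
    rintro x ⟨hx0, hx1⟩
    rw [← ENNReal.ofReal_mul (abs_nonneg _), ← ENNReal.ofReal_mul (by positivity)]
    congr 1
    rw [show s - (c * x + u) = c * (1 - x) by ring, show c * x + u - u = c * x by ring,
      rlKernel, rlKernel, Real.mul_rpow hc.le (by linarith), Real.mul_rpow hc.le hx0.le,
      show a + b - 1 = 1 + (a - 1) + (b - 1) by ring, Real.rpow_add hc, Real.rpow_add hc,
      Real.rpow_one, mul_one, abs_of_pos hc]
    field_simp
  rw [setLIntegral_congr_fun measurableSet_Ioo hpt, lintegral_const_mul' _ _ ofReal_ne_top,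
    lintegral_rpow_mul_one_sub_rpow hb ha, ← ENNReal.ofReal_mul (by positivity),
    ProbabilityTheory.beta, rlKernel, add_comm b a]
  congr 1
  field_simp

lemma integral_rlKernel_mul_rlKernel {a b u s : ℝ} (ha : 0 < a) (hb : 0 < b) (hus : u < s) :
    ∫ r in Ioo u s, rlKernel a (s - r) * rlKernel b (r - u) = rlKernel (a + b) (s - u) := by
  rw [integral_eq_lintegral_of_nonneg_ae _ (by fun_prop), lintegral_rlKernel_mul_rlKernel ha hb hus,
    toReal_ofReal (rlKernel_nonneg (by linarith) (by linarith))]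
  exact ae_restrict_of_forall_mem measurableSet_Ioo fun r hr =>
    mul_nonneg (rlKernel_nonneg ha (by linarith [hr.2])) (rlKernel_nonneg hb (by linarith [hr.1]))

lemma sq_lintegral_mul_le {α : Type*} [MeasurableSpace α] {μ : Measure α} {k f : α → ℝ≥0∞}
    (hk : AEMeasurable k μ) (hf : AEMeasurable f μ) :
    (∫⁻ x, k x * f x ∂μ) ^ 2 ≤ (∫⁻ x, k x ∂μ) * ∫⁻ x, k x * f x ^ 2 ∂μ := by
  -- Hölder with exponents `1/2, 1/2` for `k` and `k f²`.
  have hsqrt_sq : ∀ x : ℝ≥0∞, (x ^ (2⁻¹ : ℝ)) ^ 2 = x := fun x => by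
    simpa using ENNReal.rpow_inv_natCast_pow two_ne_zero x
  have hsq_sqrt : ∀ x : ℝ≥0∞, (x ^ 2) ^ (2⁻¹ : ℝ) = x := fun x => by
    simpa using ENNReal.pow_rpow_inv_natCast two_ne_zero x
  have hpt : ∀ x, k x ^ (2⁻¹ : ℝ) * (k x * f x ^ 2) ^ (2⁻¹ : ℝ) = k x * f x := fun x => by
    rw [ENNReal.mul_rpow_of_nonneg _ _ (by norm_num), ← mul_assoc, ← sq, hsqrt_sq, hsq_sqrt]
  have h := lintegral_mul_norm_pow_le hk (hk.mul (hf.pow_const 2)) (p := 2⁻¹) (q := 2⁻¹)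
    (by norm_num) (by norm_num) (by norm_num)
  simp only [Pi.mul_apply, hpt] at h
  calc (∫⁻ x, k x * f x ∂μ) ^ 2
      ≤ ((∫⁻ x, k x ∂μ) ^ (2⁻¹ : ℝ) * (∫⁻ x, k x * f x ^ 2 ∂μ) ^ (2⁻¹ : ℝ)) ^ 2 := by gcongr
    _ = (∫⁻ x, k x ∂μ) * ∫⁻ x, k x * f x ^ 2 ∂μ := by rw [mul_pow, hsqrt_sq, hsqrt_sq]

section Triangle

variable {t : ℝ}

lemma Measurable.indicator_Iio_fst {F : ℝ → ℝ → ℝ≥0∞} (hF : Measurable (Function.uncurry F)) :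
    Measurable fun p : ℝ × ℝ => (Iio p.1).indicator (F p.1) p.2 :=
  hF.indicator (measurableSet_lt measurable_snd measurable_fst)

lemma lintegral_prod_indicator_Iio {F : ℝ → ℝ → ℝ≥0∞} (hF : Measurable (Function.uncurry F)) :
    ∫⁻ p, (Iio p.1).indicator (F p.1) p.2
        ∂(volume.restrict (Ioo 0 t)).prod (volume.restrict (Ioo 0 t))
      = ∫⁻ s in Ioo 0 t, ∫⁻ r in Ioo 0 s, F s r := by
  rw [lintegral_prod _ hF.indicator_Iio_fst.aemeasurable]
  refine setLIntegral_congr_fun measurableSet_Ioo fun s hs => ?_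
  dsimp only
  rw [lintegral_indicator measurableSet_Iio, Measure.restrict_restrict measurableSet_Iio,
    Iio_inter_Ioo, min_eq_left hs.2.le]

lemma lintegral_Ioo_lintegral_Ioo_swap {F : ℝ → ℝ → ℝ≥0∞} (hF : Measurable (Function.uncurry F)) :
    ∫⁻ s in Ioo 0 t, ∫⁻ r in Ioo 0 s, F s r = ∫⁻ r in Ioo 0 t, ∫⁻ s in Ioo r t, F s r := by
  rw [← lintegral_prod_indicator_Iio hF, lintegral_prod_symm _ hF.indicator_Iio_fst.aemeasurable]
  refine setLIntegral_congr_fun measurableSet_Ioo fun r hr => ?_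
  change ∫⁻ s in Ioo 0 t, (Ioi r).indicator (fun s => F s r) s = _
  rw [lintegral_indicator measurableSet_Ioi, Measure.restrict_restrict measurableSet_Ioi,
    Ioi_inter_Ioo, max_eq_left hr.1.le]

lemma integral_Ioo_integral_Ioo_swap {E : Type*} [NormedAddCommGroup E] [NormedSpace ℝ E]
    {F : ℝ → ℝ → E} (hF : Integrable (fun p : ℝ × ℝ => (Iio p.1).indicator (F p.1) p.2)
      ((volume.restrict (Ioo 0 t)).prod (volume.restrict (Ioo 0 t)))) :
    ∫ s in Ioo 0 t, ∫ r in Ioo 0 s, F s r = ∫ r in Ioo 0 t, ∫ s in Ioo r t, F s r := by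
  calc ∫ s in Ioo 0 t, ∫ r in Ioo 0 s, F s r
      = ∫ s in Ioo 0 t, ∫ r in Ioo 0 t, (Iio s).indicator (F s) r :=
        setIntegral_congr_fun measurableSet_Ioo fun s hs => by
          rw [MeasureTheory.integral_indicator measurableSet_Iio,
            Measure.restrict_restrict measurableSet_Iio, Iio_inter_Ioo, min_eq_left hs.2.le]
    _ = ∫ r in Ioo 0 t, ∫ s in Ioo 0 t, (Ioi r).indicator (fun s => F s r) s :=
        integral_integral_swap hF
    _ = ∫ r in Ioo 0 t, ∫ s in Ioo r t, F s r :=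
        setIntegral_congr_fun measurableSet_Ioo fun r hr => by
          rw [MeasureTheory.integral_indicator measurableSet_Ioi,
            Measure.restrict_restrict measurableSet_Ioi, Ioi_inter_Ioo, max_eq_left hr.1.le]

end Triangle

noncomputable def lfracInt (a : ℝ) (f : ℝ → ℝ≥0∞) (t : ℝ) : ℝ≥0∞ :=
  ∫⁻ s in Ioo 0 t, ENNReal.ofReal (rlKernel a (t - s)) * f s

section lfracInt

variable {a b t : ℝ} {f g : ℝ → ℝ≥0∞}

lemma lfracInt_mono (h : ∀ s ∈ Ioo 0 t, f s ≤ g s) : lfracInt a f t ≤ lfracInt a g t :=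
  setLIntegral_mono' measurableSet_Ioo fun s hs => by gcongr; exact h s hs

lemma lfracInt_const_mul {c : ℝ≥0∞} (hc : c ≠ ∞) :
    lfracInt a (fun s => c * f s) t = c * lfracInt a f t := by
  simp_rw [lfracInt, mul_left_comm _ c, lintegral_const_mul' c _ hc]

lemma lfracInt_le_mul_lintegral (ha : 1 ≤ a) :
    lfracInt a f t ≤ ENNReal.ofReal (rlKernel a t) * ∫⁻ s in Ioo 0 t, f s := by
  rw [← lintegral_const_mul' _ _ ofReal_ne_top]
  refine setLIntegral_mono' measurableSet_Ioo fun s hs => ?_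
  gcongr
  exact rlKernel_le_rlKernel ha (by linarith [hs.2]) (by linarith [hs.1])

lemma lfracInt_lfracInt (ha : 0 < a) (hb : 0 < b) (hf : Measurable f) :
    lfracInt a (lfracInt b f) t = lfracInt (a + b) f t := by
  calc lfracInt a (lfracInt b f) t
      = ∫⁻ s in Ioo 0 t, ∫⁻ r in Ioo 0 s,
          ENNReal.ofReal (rlKernel a (t - s)) * (ENNReal.ofReal (rlKernel b (s - r)) * f r) := by
        simp_rw [lfracInt, ← lintegral_const_mul' _ _ ofReal_ne_top]
    _ = ∫⁻ r in Ioo 0 t, ∫⁻ s in Ioo r t,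
          ENNReal.ofReal (rlKernel a (t - s)) * (ENNReal.ofReal (rlKernel b (s - r)) * f r) :=
        lintegral_Ioo_lintegral_Ioo_swap (by fun_prop)
    _ = lfracInt (a + b) f t := setLIntegral_congr_fun measurableSet_Ioo fun r hr => by
        have hkernel : ∀ s ∈ Ioo r t, ENNReal.ofReal (rlKernel a (t - s))
            * (ENNReal.ofReal (rlKernel b (s - r)) * f r)
              = ENNReal.ofReal (rlKernel a (t - s) * rlKernel b (s - r)) * f r := fun s hs => by
          rw [ENNReal.ofReal_mul (rlKernel_nonneg ha (by linarith [hs.2])), mul_assoc]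
        rw [setLIntegral_congr_fun measurableSet_Ioo hkernel, lintegral_mul_const _ (by fun_prop),
          lintegral_rlKernel_mul_rlKernel ha hb hr.2]

end lfracInt

section fracInt

variable {E : Type*} [NormedAddCommGroup E] [NormedSpace ℝ E] {a b s t : ℝ} {f g : ℝ → E}

lemma fracInt_eq_setIntegral (ht : 0 ≤ t) :
    fracInt a f t = ∫ s in Ioo 0 t, rlKernel a (t - s) • f s := by
  rw [fracInt, intervalIntegral.integral_of_le ht, integral_Ioc_eq_integral_Ioo]

lemma fracInt_congr_ae (h : f =ᵐ[volume.restrict (Ioo 0 t)] g) (ht : 0 ≤ t) :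
    fracInt a f t = fracInt a g t := by
  simp_rw [fracInt_eq_setIntegral ht]
  refine integral_congr_ae ?_
  filter_upwards [h] with s hs
  rw [hs]

lemma eqOn_fracInt_of_ae_eq (h : f =ᵐ[volume.restrict (Ioo 0 t)] g) :
    EqOn (fracInt a f) (fracInt a g) (Icc 0 t) := fun _ hs =>
  fracInt_congr_ae (ae_restrict_of_ae_restrict_of_subset (Ioo_subset_Ioo_right hs.2) h) hs.1

lemma stronglyMeasurable_fracInt (hf : StronglyMeasurable f) :
    StronglyMeasurable (fracInt a f) := by
  have hF : StronglyMeasurable fun p : ℝ × ℝ => rlKernel a (p.1 - p.2) • f p.2 :=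
    (by fun_prop : Measurable fun p : ℝ × ℝ => rlKernel a (p.1 - p.2)).stronglyMeasurable.smul
      (hf.comp_measurable measurable_snd)
  have h₁ := (hF.indicator (s := {p | p.2 ∈ Ioc 0 p.1})
    ((measurableSet_lt measurable_const measurable_snd).inter
      (measurableSet_le measurable_snd measurable_fst))).integral_prod_right' (ν := volume)
  have h₂ := (hF.indicator (s := {p | p.2 ∈ Ioc p.1 0})
    ((measurableSet_lt measurable_fst measurable_snd).inter
      (measurableSet_le measurable_snd measurable_const))).integral_prod_right' (ν := volume)
  convert h₁.sub h₂ using 1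
  funext t
  rw [Pi.sub_apply, fracInt, intervalIntegral, ← MeasureTheory.integral_indicator measurableSet_Ioc,
    ← MeasureTheory.integral_indicator measurableSet_Ioc]
  rfl

lemma fracInt_eq_toReal_lfracInt {u : ℝ → ℝ} (ha : 0 < a) (ht : 0 ≤ t) (hu : 0 ≤ u)
    (hum : AEStronglyMeasurable u (volume.restrict (Ioo 0 t))) :
    fracInt a u t = (lfracInt a (fun s => ENNReal.ofReal (u s)) t).toReal := by
  rw [fracInt_eq_setIntegral ht, integral_eq_lintegral_of_nonneg_ae]
  · congr 1
    refine setLIntegral_congr_fun measurableSet_Ioo fun s hs => ?_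
    rw [smul_eq_mul, ENNReal.ofReal_mul (rlKernel_nonneg ha (by linarith [hs.2]))]
  · exact ae_restrict_of_forall_mem measurableSet_Ioo fun s hs =>
      mul_nonneg (rlKernel_nonneg ha (by linarith [hs.2])) (hu s)
  · exact (by fun_prop : Measurable fun s => rlKernel a (t - s)).aestronglyMeasurable.smul hum

lemma enorm_fracInt_sq_le (hb : 0 < b) (hs : 0 < s) (hst : s ≤ t)
    (hf : AEStronglyMeasurable f (volume.restrict (Ioo 0 s))) :
    ‖fracInt b f s‖ₑ ^ 2
      ≤ ENNReal.ofReal (rlKernel (b + 1) t) * lfracInt b (fun r => ‖f r‖ₑ ^ 2) s := by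
  have hle : ‖fracInt b f s‖ₑ ≤ lfracInt b (fun r => ‖f r‖ₑ) s := by
    rw [fracInt_eq_setIntegral hs.le]
    refine (enorm_integral_le_lintegral_enorm _).trans_eq
      (setLIntegral_congr_fun measurableSet_Ioo fun r hr => ?_)
    rw [enorm_smul, Real.enorm_eq_ofReal (rlKernel_nonneg hb (by linarith [hr.2]))]
  have hmass : ∫⁻ r in Ioo 0 s, ENNReal.ofReal (rlKernel b (s - r))
      = ENNReal.ofReal (rlKernel (b + 1) s) := by
    simpa [rlKernel_one] using lintegral_rlKernel_mul_rlKernel hb one_pos hs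
  calc ‖fracInt b f s‖ₑ ^ 2 ≤ lfracInt b (fun r => ‖f r‖ₑ) s ^ 2 := by gcongr
    _ ≤ ENNReal.ofReal (rlKernel (b + 1) s) * lfracInt b (fun r => ‖f r‖ₑ ^ 2) s := by
        rw [← hmass]; exact sq_lintegral_mul_le (by fun_prop) hf.enorm
    _ ≤ ENNReal.ofReal (rlKernel (b + 1) t) * lfracInt b (fun r => ‖f r‖ₑ ^ 2) s := by
        gcongr; exact rlKernel_le_rlKernel (by linarith) hs.le hst

lemma fracInt_fracInt [CompleteSpace E] (ha : 0 < a) (hb : 0 < b) (hab : 1 ≤ a + b) (ht : 0 < t)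
    (hf : StronglyMeasurable f) (hfi : IntegrableOn f (Ioo 0 t)) :
    fracInt a (fracInt b f) t = fracInt (a + b) f t := by
  set F : ℝ → ℝ → E := fun s r => (rlKernel a (t - s) * rlKernel b (s - r)) • f r
  have hFm : StronglyMeasurable (Function.uncurry F) :=
    (by fun_prop : Measurable fun p : ℝ × ℝ => rlKernel a (t - p.1) * rlKernel b (p.1 - p.2)
      ).stronglyMeasurable.smul (hf.comp_measurable measurable_snd)
  have hnorm : ∫⁻ s in Ioo 0 t, ∫⁻ r in Ioo 0 s, ‖F s r‖ₑ
      = lfracInt a (lfracInt b fun r => ‖f r‖ₑ) t :=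
    setLIntegral_congr_fun measurableSet_Ioo fun s hs => by
      rw [lfracInt, ← lintegral_const_mul' _ _ ofReal_ne_top]
      refine setLIntegral_congr_fun measurableSet_Ioo fun r hr => ?_
      have hka := rlKernel_nonneg ha (by linarith [hs.2] : 0 ≤ t - s)
      have hkb := rlKernel_nonneg hb (by linarith [hr.2] : 0 ≤ s - r)
      rw [enorm_smul, Real.enorm_eq_ofReal (mul_nonneg hka hkb), ENNReal.ofReal_mul hka, mul_assoc]
  have hFi : Integrable (fun p : ℝ × ℝ => (Iio p.1).indicator (F p.1) p.2)
      ((volume.restrict (Ioo 0 t)).prod (volume.restrict (Ioo 0 t))) := by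
    refine ⟨(hFm.indicator (measurableSet_lt measurable_snd measurable_fst)).aestronglyMeasurable,
      ?_⟩
    simp_rw [HasFiniteIntegral, enorm_indicator_eq_indicator_enorm]
    rw [lintegral_prod_indicator_Iio (F := fun s r => ‖F s r‖ₑ) hFm.enorm, hnorm,
      lfracInt_lfracInt ha hb hf.enorm]
    exact (lfracInt_le_mul_lintegral hab).trans_lt (mul_lt_top ofReal_lt_top hfi.2)
  calc fracInt a (fracInt b f) t = ∫ s in Ioo 0 t, ∫ r in Ioo 0 s, F s r := by
        rw [fracInt_eq_setIntegral ht.le]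
        refine setIntegral_congr_fun measurableSet_Ioo fun s hs => ?_
        simp_rw [fracInt_eq_setIntegral hs.1.le, F, mul_smul, MeasureTheory.integral_smul]
    _ = ∫ r in Ioo 0 t, ∫ s in Ioo r t, F s r := integral_Ioo_integral_Ioo_swap hFi
    _ = fracInt (a + b) f t := by
        rw [fracInt_eq_setIntegral ht.le]
        refine setIntegral_congr_fun measurableSet_Ioo fun r hr => ?_
        simp only [F]
        rw [_root_.integral_smul_const, integral_rlKernel_mul_rlKernel ha hb hr.2]

end fracInt

section Estimate

variable {E : Type*} [NormedAddCommGroup E] [NormedSpace ℝ E] {a b t : ℝ} {f : ℝ → E}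

lemma lfracInt_enorm_fracInt_sq_lt_top (ha : 0 < a) (hb : 0 < b) (hab : 1 ≤ a + b)
    (hf : StronglyMeasurable f) (hf2 : MemLp f 2 (volume.restrict (Ioo 0 t))) :
    lfracInt a (fun s => ‖fracInt b f s‖ₑ ^ 2) t < ∞ := by
  have hf2' : ∫⁻ s in Ioo 0 t, ‖f s‖ₑ ^ 2 < ∞ := by
    simpa using lintegral_rpow_enorm_lt_top_of_eLpNorm_lt_top two_ne_zero ofNat_ne_top hf2.2
  calc lfracInt a (fun s => ‖fracInt b f s‖ₑ ^ 2) t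
      ≤ lfracInt a (fun s => ENNReal.ofReal (rlKernel (b + 1) t)
          * lfracInt b (fun r => ‖f r‖ₑ ^ 2) s) t :=
        lfracInt_mono fun s hs => enorm_fracInt_sq_le hb hs.1 hs.2.le hf.aestronglyMeasurable
    _ = ENNReal.ofReal (rlKernel (b + 1) t) * lfracInt (a + b) (fun r => ‖f r‖ₑ ^ 2) t := by
        rw [lfracInt_const_mul ofReal_ne_top, lfracInt_lfracInt ha hb (hf.enorm.pow_const 2)]
    _ ≤ ENNReal.ofReal (rlKernel (b + 1) t)
          * (ENNReal.ofReal (rlKernel (a + b) t) * ∫⁻ s in Ioo 0 t, ‖f s‖ₑ ^ 2) := by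
        gcongr; exact lfracInt_le_mul_lintegral hab
    _ < ∞ := mul_lt_top ofReal_lt_top (mul_lt_top ofReal_lt_top hf2')

lemma lfracInt_enorm_fracInt_one_sq_le [CompleteSpace E] {α ν : ℝ} (hα : 0 < α) (hν : 0 < ν)
    (hν1 : ν < 1) (hf : StronglyMeasurable f) (hfi : IntegrableOn f (Ioo 0 t)) :
    lfracInt α (fun s => ‖fracInt 1 f s‖ₑ ^ 2) t
      ≤ ENNReal.ofReal (rlKernel (2 - ν) t)
        * lfracInt (1 + α - ν) (fun s => ‖fracInt ν f s‖ₑ ^ 2) t := by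
  have hψ := stronglyMeasurable_fracInt (a := ν) hf
  have hpt : ∀ s ∈ Ioo 0 t, ‖fracInt 1 f s‖ₑ ^ 2 ≤ ENNReal.ofReal (rlKernel (2 - ν) t)
      * lfracInt (1 - ν) (fun r => ‖fracInt ν f r‖ₑ ^ 2) s := fun s hs => by
    have hsemi := fracInt_fracInt (a := 1 - ν) (by linarith) hν (by linarith) hs.1 hf
      (hfi.mono_set (Ioo_subset_Ioo_right hs.2.le))
    rw [sub_add_cancel] at hsemi
    rw [← hsemi, show 2 - ν = 1 - ν + 1 by ring]
    exact enorm_fracInt_sq_le (by linarith) hs.1 hs.2.le hψ.aestronglyMeasurable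
  calc lfracInt α (fun s => ‖fracInt 1 f s‖ₑ ^ 2) t
      ≤ lfracInt α (fun s => ENNReal.ofReal (rlKernel (2 - ν) t)
          * lfracInt (1 - ν) (fun r => ‖fracInt ν f r‖ₑ ^ 2) s) t := lfracInt_mono hpt
    _ = ENNReal.ofReal (rlKernel (2 - ν) t)
          * lfracInt (1 + α - ν) (fun s => ‖fracInt ν f s‖ₑ ^ 2) t := by
        rw [lfracInt_const_mul ofReal_ne_top, lfracInt_lfracInt hα (by linarith)
          (hψ.enorm.pow_const 2), show α + (1 - ν) = 1 + α - ν by ring]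

end Estimate

theorem stmt2_general {H : Type*} [NormedAddCommGroup H] [InnerProductSpace ℝ H] [CompleteSpace H]
    (α ν t : ℝ) (hα : 0 < α) (hν : 0 < ν) (hν1 : ν ≤ 1) (ht : 0 < t)
    (φ : ℝ → H) (hφ : MemLp φ 2 (volume.restrict (Set.Ioo 0 t))) :
    fracInt α (fun s => ‖fracInt 1 φ s‖ ^ 2) t ≤
      rlKernel (2 - ν) t * fracInt (1 + α - ν) (fun s => ‖fracInt ν φ s‖ ^ 2) t := by
  rcases hν1.eq_or_lt with rfl | hν1
  · norm_num [rlKernel_one]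
  obtain ⟨G, hGm, hφG⟩ : ∃ G, StronglyMeasurable G ∧ φ =ᵐ[volume.restrict (Ioo 0 t)] G :=
    ⟨hφ.1.mk φ, hφ.1.stronglyMeasurable_mk, hφ.1.ae_eq_mk⟩
  have hG := hφ.ae_eq hφG
  have hsq (a : ℝ) : (fun s => ‖fracInt a φ s‖ ^ 2) =ᵐ[volume.restrict (Ioo 0 t)]
      fun s => ‖fracInt a G s‖ ^ 2 :=
    ae_restrict_of_forall_mem measurableSet_Ioo fun s hs =>
      congrArg (‖·‖ ^ 2) (eqOn_fracInt_of_ae_eq hφG (Ioo_subset_Icc_self hs))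
  have hm (a : ℝ) : AEStronglyMeasurable (fun s => ‖fracInt a G s‖ ^ 2)
      (volume.restrict (Ioo 0 t)) :=
    ((stronglyMeasurable_fracInt hGm).norm.pow 2).aestronglyMeasurable
  rw [fracInt_congr_ae (hsq 1) ht.le, fracInt_congr_ae (hsq ν) ht.le,
    fracInt_eq_toReal_lfracInt hα ht.le (fun s => sq_nonneg _) (hm 1),
    fracInt_eq_toReal_lfracInt (by linarith) ht.le (fun s => sq_nonneg _) (hm ν),
    ← toReal_ofReal (rlKernel_nonneg (by linarith : 0 < 2 - ν) ht.le), ← toReal_mul]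
  simp only [ofReal_pow (norm_nonneg _), ofReal_norm]
  exact toReal_mono (mul_ne_top ofReal_ne_top
    (lfracInt_enorm_fracInt_sq_lt_top (by linarith) hν (by linarith) hGm hG).ne)
    (lfracInt_enorm_fracInt_one_sq_le hα hν hν1 hGm (hG.integrable one_le_two))

theorem stmt2 {H : Type*} [NormedAddCommGroup H] [InnerProductSpace ℝ H] [CompleteSpace H]
    (α ν t : ℝ) (hα : 0 < α) (hα1 : α ≤ 1) (hν : 0 < ν) (hν1 : ν ≤ 1) (ht : 0 < t)
    (φ : ℝ → H) (hφ : MemLp φ 2 (volume.restrict (Set.Ioo 0 t))) :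
    fracInt α (fun s => ‖fracInt 1 φ s‖ ^ 2) t ≤
      rlKernel (2 - ν) t * fracInt (1 + α - ν) (fun s => ‖fracInt ν φ s‖ ^ 2) t :=
  stmt2_general α ν t hα hν hν1 ht φ hφ
end

section
/- Weakly singular Gronwall inequality (discrete convolution quadrature version): let 0<α<1, M≥0 and T>0. There exists a constant C>0, depending only on α, M and T, with the following property: for every integer N≥1 and τ=T/N with Mτ^α ≤ 1/2, if (y_n)_{n=0}^N are nonnegative reals and (f_n)_{n=0}^N are nonnegative and nondecreasing in n, and y_n ≤ f_n + M τ^α Σ_{j=0}^n a_{n−j}^{(−α)} y_j for all 0≤n≤N, then y_n ≤ C f_n for all 0≤n≤N. -/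
/-!
The weights `a_j^{(-s)}` are the coefficients of `(1 - ξ)^{-s}`, hence nonnegative for `s ≥ 0`
and multiplicative under convolution: `a^{(-s)} * a^{(-t)} = a^{(-(s+t))}` (Chu–Vandermonde).
Absorbing the diagonal term (possible since `Mτ^α ≤ 1/2`) gives
`y_n ≤ 2 f_n + λ Σ_{j<n} a_{n-j}^{(-α)} y_j` with `λ = 2Mτ^α`. The discrete Mittag-Leffler
function `E_n = Σ_{k ≤ n} λ^k a_n^{(-(kα+1))}` satisfies `1 + λ Σ_{j<n} a_{n-j}^{(-α)} E_j ≤ E_n`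
by the convolution identity, so by induction and monotonicity of `f`, `y_n ≤ 2 f_n E_n`.
Finally `λ^k a_n^{(-(kα+1))} ≤ (4eMT^α / k^α)^k` for `k ≤ n ≤ N`, and these bounds form a
summable series independent of `N`.
-/

/-- The convolution quadrature weight `a_j^{(β)} = (-1)^j (β choose j)`, where
`(β choose j) = β(β-1)⋯(β-j+1)/j!` is the generalized binomial coefficient. -/
noncomputable def cqWeight (β : ℝ) (j : ℕ) : ℝ :=
  (-1) ^ j * ((∏ i ∈ Finset.range j, (β - i)) / (j.factorial : ℝ))

open Finset Real Filter
open scoped Nat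

lemma cqWeight_eq_neg_one_pow_mul_choose (β : ℝ) (j : ℕ) :
    cqWeight β j = (-1) ^ j * Ring.choose β j := by
  have h := Ring.descPochhammer_eq_factorial_smul_choose β j
  rw [← Polynomial.aeval_eq_smeval, Polynomial.aeval_def, Polynomial.eval₂_eq_eval_map,
    descPochhammer_map, descPochhammer_eval_eq_prod_range, nsmul_eq_mul] at h
  rw [cqWeight, h, mul_div_cancel_left₀ _ (by positivity)]

lemma cqWeight_add (β γ : ℝ) (n : ℕ) :
    cqWeight (β + γ) n = ∑ j ∈ range (n + 1), cqWeight β j * cqWeight γ (n - j) := by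
  simp only [cqWeight_eq_neg_one_pow_mul_choose, Ring.add_choose_eq n (Commute.all β γ),
    mul_sum, Nat.sum_antidiagonal_eq_sum_range_succ (fun i j => Ring.choose β i * Ring.choose γ j)]
  refine sum_congr rfl fun j hj => ?_
  rw [← pow_sub_mul_pow (-1 : ℝ) (Nat.le_of_lt_succ (mem_range.mp hj))]
  ring

lemma cqWeight_zero (β : ℝ) : cqWeight β 0 = 1 := by simp [cqWeight]

lemma cqWeight_neg (s : ℝ) (j : ℕ) :
    cqWeight (-s) j = (∏ i ∈ range j, (s + i)) / j ! := by
  have : ∏ i ∈ range j, (-s - i) = (-1) ^ j * ∏ i ∈ range j, (s + i) := by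
    simp only [← neg_add', prod_neg, card_range]
  rw [cqWeight, this, mul_div_assoc, ← mul_assoc, ← mul_pow]
  norm_num

lemma cqWeight_neg_nonneg {s : ℝ} (hs : 0 ≤ s) (j : ℕ) : 0 ≤ cqWeight (-s) j := by
  rw [cqWeight_neg]
  exact div_nonneg (prod_nonneg fun i _ => by positivity) (by positivity)

lemma cqWeight_neg_one (j : ℕ) : cqWeight (-1) j = 1 := by
  rw [cqWeight_neg, div_eq_one_iff_eq (by positivity), ← prod_range_add_one_eq_factorial]
  push_cast
  exact prod_congr rfl fun i _ => add_comm _ _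

lemma inv_add_one_le_log_sub_log {x : ℝ} (hx : 0 < x) : (x + 1)⁻¹ ≤ log (x + 1) - log x := by
  have h := one_sub_inv_le_log_of_pos (show 0 < (x + 1) / x by positivity)
  rw [log_div (by positivity) hx.ne', inv_div] at h
  calc (x + 1)⁻¹ = 1 - x / (x + 1) := by field_simp; ring
    _ ≤ _ := h

lemma cqWeight_neg_add_one_eq_prod (s : ℝ) (n : ℕ) :
    cqWeight (-(s + 1)) n = ∏ i ∈ range n, (1 + s / (i + 1)) := by
  rw [cqWeight_neg, ← prod_range_add_one_eq_factorial, Nat.cast_prod, ← prod_div_distrib]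
  refine prod_congr rfl fun i _ => ?_
  push_cast
  field_simp
  ring

lemma prod_Ico_one_add_div_le_rpow {s : ℝ} (hs : 0 ≤ s) {m n : ℕ} (hm : 1 ≤ m) (hmn : m ≤ n) :
    ∏ i ∈ Ico m n, (1 + s / (i + 1)) ≤ ((n : ℝ) / m) ^ s := by
  have hm0 : (0 : ℝ) < m := by exact_mod_cast hm
  have hn0 : (0 : ℝ) < n := by exact_mod_cast hm.trans hmn
  calc ∏ i ∈ Ico m n, (1 + s / (i + 1))
      ≤ ∏ i ∈ Ico m n, exp (s * (log ((i + 1 : ℕ) : ℝ) - log (i : ℝ))) := by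
        refine prod_le_prod (fun i _ => by positivity) fun i hi => ?_
        have hi : (0 : ℝ) < i := Nat.cast_pos.mpr (hm.trans (mem_Ico.mp hi).1)
        calc 1 + s / (i + 1) ≤ exp (s / (i + 1)) := by linarith [add_one_le_exp (s / (i + 1))]
          _ ≤ _ := by
            rw [exp_le_exp, div_eq_mul_inv]; push_cast
            exact mul_le_mul_of_nonneg_left (inv_add_one_le_log_sub_log hi) hs
    _ = ((n : ℝ) / m) ^ s := by
        rw [← exp_sum, ← mul_sum, sum_Ico_sub (fun i => log (i : ℝ)) hmn,
          rpow_def_of_pos (div_pos hn0 hm0), log_div hn0.ne' hm0.ne', mul_comm]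

-- The first `m` factors are at most `2m/(i+1)`, giving `(2m)^m/m! ≤ (2e)^m`; the remaining ones
-- telescope. The resulting factor `m^{-s}` is what makes the Mittag-Leffler series below converge.
lemma cqWeight_neg_add_one_le {s : ℝ} (hs : 0 ≤ s) {m n : ℕ} (hsm : s ≤ m) (hm : 1 ≤ m)
    (hmn : m ≤ n) : cqWeight (-(s + 1)) n ≤ (2 * exp 1) ^ m * ((n : ℝ) / m) ^ s := by
  rw [cqWeight_neg_add_one_eq_prod, ← prod_range_mul_prod_Ico _ hmn]
  have head : ∏ i ∈ range m, (1 + s / (i + 1)) ≤ (2 * exp 1) ^ m := by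
    calc ∏ i ∈ range m, (1 + s / (i + 1))
        ≤ ∏ i ∈ range m, (2 * m / (i + 1) : ℝ) := by
          refine prod_le_prod (fun i _ => by positivity) fun i hi => ?_
          have : (i : ℝ) + 1 ≤ m := by exact_mod_cast mem_range.mp hi
          rw [le_div_iff₀ (by positivity), add_mul, div_mul_cancel₀ _ (by positivity)]
          linarith
      _ = 2 ^ m * ((m : ℝ) ^ m / m !) := by
          rw [prod_div_distrib, prod_const, card_range, mul_pow, mul_div_assoc,
            ← prod_range_add_one_eq_factorial, Nat.cast_prod]
          push_cast; rfl
      _ ≤ 2 ^ m * exp 1 ^ m := by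
          rw [← exp_nat_mul, mul_one]
          gcongr
          exact pow_div_factorial_le_exp _ m.cast_nonneg m
      _ = (2 * exp 1) ^ m := (mul_pow _ _ _).symm
  exact mul_le_mul head (prod_Ico_one_add_div_le_rpow hs hm hmn)
    (prod_nonneg fun i _ => by positivity) (by positivity)

lemma pow_mul_cqWeight_le {α μ τ T : ℝ} (hα0 : 0 ≤ α) (hα1 : α ≤ 1) (hμ : 0 ≤ μ) (hτ : 0 ≤ τ)
    {k n : ℕ} (hkn : k ≤ n) (hnτ : n * τ ≤ T) :
    (μ * τ ^ α) ^ k * cqWeight (-(k * α + 1)) n ≤ (2 * exp 1 * μ * T ^ α / (k : ℝ) ^ α) ^ k := by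
  rcases Nat.eq_zero_or_pos k with rfl | hk
  · simp [cqWeight_neg_one]
  have hk0 : (0 : ℝ) < k := by exact_mod_cast hk
  have hT : 0 ≤ T := le_trans (by positivity) hnτ
  have hbound := cqWeight_neg_add_one_le (by positivity) (mul_le_of_le_one_right k.cast_nonneg hα1)
    hk hkn
  rw [mul_comm (k : ℝ) α, rpow_mul_natCast (by positivity), ← mul_comm (k : ℝ) α] at hbound
  calc (μ * τ ^ α) ^ k * cqWeight (-(k * α + 1)) n
      ≤ (μ * τ ^ α) ^ k * ((2 * exp 1) ^ k * (((n : ℝ) / k) ^ α) ^ k) := by gcongr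
    _ = (2 * exp 1 * μ * (n * τ / k) ^ α) ^ k := by
        rw [← mul_pow, ← mul_pow, mul_comm (n : ℝ) τ, mul_div_assoc, mul_rpow hτ (by positivity)]
        ring
    _ ≤ (2 * exp 1 * μ * T ^ α / (k : ℝ) ^ α) ^ k := by
        rw [mul_div_assoc (2 * exp 1 * μ), ← div_rpow hT hk0.le]
        gcongr

lemma summable_div_rpow_pow {α : ℝ} (hα : 0 < α) (A : ℝ) :
    Summable fun k : ℕ => (A / (k : ℝ) ^ α) ^ k := by
  have hlim : Tendsto (fun k : ℕ => A / (k : ℝ) ^ α) atTop (nhds 0) :=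
    tendsto_const_nhds.div_atTop ((tendsto_rpow_atTop hα).comp tendsto_natCast_atTop_atTop)
  refine summable_geometric_two.of_norm_bounded_eventually_nat ?_
  filter_upwards [hlim.norm.eventually (ge_mem_nhds (by norm_num : ‖(0 : ℝ)‖ < 1 / 2))]
    with k hk
  rw [norm_pow]
  exact pow_le_pow_left₀ (norm_nonneg _) hk k

-- Discrete analogue of `E_α(λ t^α) = Σ_k λ^k t^{kα} / Γ(kα + 1)`, as
-- `a_n^{(-(kα+1))} ~ n^{kα} / Γ(kα + 1)`.
noncomputable def cqMittagLeffler (α lam : ℝ) (n : ℕ) : ℝ :=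
  ∑ k ∈ range (n + 1), lam ^ k * cqWeight (-(k * α + 1)) n

lemma mul_sum_cqWeight_mul_pow_mul_cqWeight (α lam : ℝ) (k n : ℕ) :
    lam * ∑ j ∈ range (n + 1), cqWeight (-α) (n - j) * (lam ^ k * cqWeight (-(k * α + 1)) j) =
      lam ^ (k + 1) * cqWeight (-((k + 1 : ℕ) * α + 1)) n := by
  rw [show -((k + 1 : ℕ) * α + 1) = -(k * α + 1) + -α by push_cast; ring, cqWeight_add,
    mul_sum, mul_sum]
  exact sum_congr rfl fun j _ => by ring

lemma cqMittagLeffler_nonneg {α lam : ℝ} (hα : 0 ≤ α) (hlam : 0 ≤ lam) (n : ℕ) :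
    0 ≤ cqMittagLeffler α lam n :=
  sum_nonneg fun k _ => mul_nonneg (pow_nonneg hlam k) (cqWeight_neg_nonneg (by positivity) n)

lemma one_add_mul_sum_cqWeight_mul_cqMittagLeffler_le {α lam : ℝ} (hα : 0 ≤ α) (hlam : 0 ≤ lam)
    (n : ℕ) :
    1 + lam * ∑ j ∈ range n, cqWeight (-α) (n - j) * cqMittagLeffler α lam j ≤
      cqMittagLeffler α lam n := by
  set t : ℕ → ℕ → ℝ := fun k j => lam ^ k * cqWeight (-(k * α + 1)) j with ht_def
  have ht : ∀ k j, 0 ≤ t k j := fun k j =>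
    mul_nonneg (pow_nonneg hlam k) (cqWeight_neg_nonneg (by positivity) j)
  have hw : ∀ j, 0 ≤ cqWeight (-α) j := cqWeight_neg_nonneg hα
  calc 1 + lam * ∑ j ∈ range n, cqWeight (-α) (n - j) * cqMittagLeffler α lam j
      ≤ 1 + lam * ∑ j ∈ range n, cqWeight (-α) (n - j) * ∑ k ∈ range n, t k j := by
        gcongr with j hj
        · exact hw _
        · exact sum_le_sum_of_subset_of_nonneg (range_subset_range.mpr (mem_range.mp hj))
            fun k _ _ => ht k j
    _ = 1 + ∑ k ∈ range n, lam * ∑ j ∈ range n, cqWeight (-α) (n - j) * t k j := by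
        simp only [mul_sum]
        rw [sum_comm]
    _ ≤ 1 + ∑ k ∈ range n, lam * ∑ j ∈ range (n + 1), cqWeight (-α) (n - j) * t k j := by
        gcongr with k
        · exact fun j _ _ => mul_nonneg (hw _) (ht k j)
        · exact n.le_succ
    _ = cqMittagLeffler α lam n := by
        simp only [ht_def, mul_sum_cqWeight_mul_pow_mul_cqWeight]
        rw [cqMittagLeffler, sum_range_succ' _ n]
        simp [cqWeight_neg_one, add_comm]

lemma cqMittagLeffler_le_tsum {α μ τ T : ℝ} (hα0 : 0 < α) (hα1 : α ≤ 1) (hμ : 0 ≤ μ) (hτ : 0 ≤ τ)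
    {n : ℕ} (hnτ : n * τ ≤ T) :
    cqMittagLeffler α (μ * τ ^ α) n ≤ ∑' k : ℕ, (2 * exp 1 * μ * T ^ α / (k : ℝ) ^ α) ^ k := by
  have hT : 0 ≤ T := le_trans (by positivity) hnτ
  calc cqMittagLeffler α (μ * τ ^ α) n
      ≤ ∑ k ∈ range (n + 1), (2 * exp 1 * μ * T ^ α / (k : ℝ) ^ α) ^ k :=
        sum_le_sum fun k hk => pow_mul_cqWeight_le hα0.le hα1 hμ hτ
          (Nat.lt_succ_iff.mp (mem_range.mp hk)) hnτ
    _ ≤ _ := (summable_div_rpow_pow hα0 _).sum_le_tsum _ fun k _ => by positivity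

lemma le_mul_of_le_add_mul_sum {a f y E : ℕ → ℝ} {lam : ℝ} {N : ℕ} (ha : ∀ j, 0 ≤ a j)
    (hlam : 0 ≤ lam) (hf : ∀ n ≤ N, 0 ≤ f n) (hmono : ∀ m n, m ≤ n → n ≤ N → f m ≤ f n)
    (hE0 : ∀ n ≤ N, 0 ≤ E n) (hE : ∀ n ≤ N, 1 + lam * ∑ j ∈ range n, a (n - j) * E j ≤ E n)
    (hy : ∀ n ≤ N, y n ≤ f n + lam * ∑ j ∈ range n, a (n - j) * y j) :
    ∀ n ≤ N, y n ≤ f n * E n := by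
  intro n
  induction n using Nat.strong_induction_on with
  | _ n ih =>
    intro hn
    have hsum : ∑ j ∈ range n, a (n - j) * y j ≤ f n * ∑ j ∈ range n, a (n - j) * E j := by
      rw [mul_sum]
      refine sum_le_sum fun j hj => ?_
      have hjn := mem_range.mp hj
      calc a (n - j) * y j ≤ a (n - j) * (f n * E j) := by
            gcongr
            · exact ha _
            · exact (ih j hjn (by omega)).trans
                (mul_le_mul_of_nonneg_right (hmono j n hjn.le hn) (hE0 j (by omega)))
        _ = f n * (a (n - j) * E j) := by ring
    calc y n ≤ f n + lam * (f n * ∑ j ∈ range n, a (n - j) * E j) :=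
          (hy n hn).trans (by gcongr)
      _ = f n * (1 + lam * ∑ j ∈ range n, a (n - j) * E j) := by ring
      _ ≤ f n * E n := mul_le_mul_of_nonneg_left (hE n hn) (hf n hn)

lemma le_two_mul_add_of_le_add_mul_sum {a y : ℕ → ℝ} {b μ : ℝ} {n : ℕ} (ha : a 0 = 1)
    (hμ : μ ≤ 1 / 2) (hy : 0 ≤ y n)
    (h : y n ≤ b + μ * ∑ j ∈ range (n + 1), a (n - j) * y j) :
    y n ≤ 2 * b + 2 * μ * ∑ j ∈ range n, a (n - j) * y j := by
  rw [sum_range_succ, Nat.sub_self, ha, one_mul] at h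
  nlinarith

/-- Weakly singular Gronwall inequality, discrete convolution quadrature version. -/
theorem stmt14 (α M T : ℝ) (hα0 : 0 < α) (hα1 : α < 1) (hM : 0 ≤ M) (hT : 0 < T) :
    ∃ C > 0, ∀ N : ℕ, 1 ≤ N →
      M * (T / N) ^ α ≤ 1 / 2 →
      ∀ y f : ℕ → ℝ,
        (∀ n ≤ N, 0 ≤ y n) →
        (∀ n ≤ N, 0 ≤ f n) →
        (∀ m n, m ≤ n → n ≤ N → f m ≤ f n) →
        (∀ n ≤ N, y n ≤ f n +
          M * (T / N) ^ α * ∑ j ∈ Finset.range (n + 1), cqWeight (-α) (n - j) * y j) →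
        ∀ n ≤ N, y n ≤ C * f n := by
  set g : ℕ → ℝ := fun k => (2 * exp 1 * (2 * M) * T ^ α / (k : ℝ) ^ α) ^ k
  have hg : Summable g := summable_div_rpow_pow hα0 _
  refine ⟨2 * ∑' k, g k, ?_, ?_⟩
  · have := hg.le_tsum 0 fun k _ => by positivity
    simp only [g, pow_zero] at this
    linarith
  intro N _ hsmall y f hy hf hmono hrec
  set τ := T / N
  have hτ : 0 ≤ τ := by positivity
  have hnτ : ∀ n ≤ N, n * τ ≤ T := fun n hn => by
    calc n * τ ≤ N * τ := by gcongr
      _ = T := mul_div_cancel₀ T (by positivity)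
  have hcmp := le_mul_of_le_add_mul_sum (a := cqWeight (-α)) (f := fun n => 2 * f n) (y := y)
    (E := cqMittagLeffler α (2 * M * τ ^ α)) (cqWeight_neg_nonneg hα0.le) (by positivity)
    (fun n hn => by linarith [hf n hn]) (fun m n hmn hn => by linarith [hmono m n hmn hn])
    (fun n _ => cqMittagLeffler_nonneg hα0.le (by positivity) n)
    (fun n _ => one_add_mul_sum_cqWeight_mul_cqMittagLeffler_le hα0.le (by positivity) n)
    (fun n hn => by
      simpa only [mul_assoc] using
        le_two_mul_add_of_le_add_mul_sum (cqWeight_zero _) hsmall (hy n hn) (hrec n hn))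
  intro n hn
  calc y n ≤ 2 * f n * cqMittagLeffler α (2 * M * τ ^ α) n := hcmp n hn
    _ ≤ 2 * f n * ∑' k, g k := by
        gcongr
        · linarith [hf n hn]
        · exact cqMittagLeffler_le_tsum hα0 hα1.le (by positivity) hτ (hnτ n hn)
    _ = 2 * (∑' k, g k) * f n := by ring
end

section
/- Discrete Cauchy–Schwarz bound for the convolution quadrature fractional integral: let 0<α<1. There exists a constant C>0, depending only on α, such that for every real Hilbert space H, every τ>0, every integer n≥1, and every w_0,…,w_n ∈ H, ‖(∂_τ^{−α} w)^n‖² ≤ C (nτ)^α (∂_τ^{−α} g)^n where g_j=‖w_j‖²; explicitly, ‖τ^α Σ_{j=0}^n a_{n−j}^{(−α)} w_j‖² ≤ C (nτ)^α · τ^α Σ_{j=0}^n a_{n−j}^{(−α)} ‖w_j‖². -/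
open Finset Real

lemma cqWeight_eq_prod (β : ℝ) (n : ℕ) :
    cqWeight β n = ∏ i ∈ range n, ((i - β) / (i + 1)) := by
  have hfac : ((n.factorial : ℕ) : ℝ) = ∏ i ∈ range n, ((i : ℝ) + 1) := by
    rw [← prod_range_add_one_eq_factorial]; push_cast; rfl
  have hsign := prod_neg (s := range n) fun i : ℕ => β - i
  simp only [card_range, neg_sub] at hsign
  rw [cqWeight, prod_div_distrib, hfac, ← mul_div_assoc, hsign]

lemma cqWeight_nonneg {β : ℝ} (hβ : β ≤ 0) (n : ℕ) : 0 ≤ cqWeight β n := by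
  rw [cqWeight_eq_prod]
  exact prod_nonneg fun i _ => div_nonneg (by linarith [i.cast_nonneg (α := ℝ)]) (by positivity)

/-- Pascal's rule `(β choose n+1) = (β-1 choose n+1) + (β-1 choose n)` for the weights. -/
lemma cqWeight_sub_one_succ (β : ℝ) (n : ℕ) :
    cqWeight (β - 1) (n + 1) = cqWeight (β - 1) n + cqWeight β (n + 1) := by
  have hshift : ∏ i ∈ range n, (β - ((i + 1 : ℕ) : ℝ)) = ∏ i ∈ range n, (β - 1 - i) :=
    prod_congr rfl fun i _ => by push_cast; ring
  rw [cqWeight, cqWeight, cqWeight, prod_range_succ, prod_range_succ', hshift,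
    Nat.factorial_succ]
  push_cast
  field_simp
  ring

lemma sum_range_cqWeight (β : ℝ) (n : ℕ) :
    ∑ k ∈ range (n + 1), cqWeight β k = cqWeight (β - 1) n := by
  induction n with
  | zero => simp [cqWeight]
  | succ n ih => rw [sum_range_succ, ih, cqWeight_sub_one_succ]

lemma sum_range_cqWeight_neg_le {α : ℝ} (hα : 0 ≤ α) {n : ℕ} (hn : 1 ≤ n) :
    ∑ k ∈ range (n + 1), cqWeight (-α) k ≤ exp α * (n : ℝ) ^ α := by
  have hfactor (i : ℕ) : ((i : ℝ) - (-α - 1)) / (i + 1) ≤ exp (α / (i + 1)) := by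
    have hi : (0 : ℝ) < i + 1 := by positivity
    calc ((i : ℝ) - (-α - 1)) / (i + 1) = α / (i + 1) + 1 := by field_simp; ring
      _ ≤ exp (α / (i + 1)) := add_one_le_exp _
  have hharmonic : ∑ i ∈ range n, α / ((i : ℝ) + 1) = α * harmonic n := by
    rw [harmonic]
    push_cast
    simp only [mul_sum, div_eq_mul_inv]
  calc ∑ k ∈ range (n + 1), cqWeight (-α) k
      = ∏ i ∈ range n, (((i : ℝ) - (-α - 1)) / (i + 1)) := by
        rw [sum_range_cqWeight, cqWeight_eq_prod]
    _ ≤ ∏ i ∈ range n, exp (α / (i + 1)) :=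
        prod_le_prod (fun i _ => div_nonneg (by linarith [i.cast_nonneg (α := ℝ)]) (by positivity))
          fun i _ => hfactor i
    _ = exp (α * harmonic n) := by rw [← exp_sum, hharmonic]
    _ ≤ exp (α * (1 + log n)) := by gcongr; exact harmonic_le_one_add_log n
    _ = exp α * (n : ℝ) ^ α := by
        rw [rpow_def_of_pos (by exact_mod_cast hn), ← exp_add]; ring_nf

lemma norm_sum_smul_sq_le {ι E : Type*} [SeminormedAddCommGroup E] [NormedSpace ℝ E]
    {s : Finset ι} {a : ι → ℝ} (ha : ∀ i ∈ s, 0 ≤ a i) (w : ι → E) :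
    ‖∑ i ∈ s, a i • w i‖ ^ 2 ≤ (∑ i ∈ s, a i) * ∑ i ∈ s, a i * ‖w i‖ ^ 2 := by
  have htriangle : ‖∑ i ∈ s, a i • w i‖ ≤ ∑ i ∈ s, a i * ‖w i‖ :=
    (norm_sum_le _ _).trans_eq <| sum_congr rfl fun i hi => by
      rw [norm_smul, norm_of_nonneg (ha i hi)]
  calc ‖∑ i ∈ s, a i • w i‖ ^ 2 ≤ (∑ i ∈ s, a i * ‖w i‖) ^ 2 := by gcongr
    _ ≤ (∑ i ∈ s, a i) * ∑ i ∈ s, a i * ‖w i‖ ^ 2 :=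
        sum_sq_le_sum_mul_sum_of_sq_le_mul s ha
          (fun i hi => mul_nonneg (ha i hi) (sq_nonneg _)) fun i _ => le_of_eq (by ring)

theorem stmt16_general (α : ℝ) (hα0 : 0 < α) :
    ∃ C > 0, ∀ (H : Type) [NormedAddCommGroup H] [InnerProductSpace ℝ H],
      ∀ τ : ℝ, 0 < τ → ∀ n : ℕ, 1 ≤ n → ∀ w : ℕ → H,
        ‖τ ^ α • ∑ j ∈ Finset.range (n + 1), cqWeight (-α) (n - j) • w j‖ ^ 2 ≤
          C * ((n : ℝ) * τ) ^ α *
            (τ ^ α * ∑ j ∈ Finset.range (n + 1), cqWeight (-α) (n - j) * ‖w j‖ ^ 2) := by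
  refine ⟨exp α, exp_pos α, fun H _ _ τ hτ n hn w => ?_⟩
  have ha : ∀ j ∈ range (n + 1), 0 ≤ cqWeight (-α) (n - j) :=
    fun j _ => cqWeight_nonneg (by linarith) _
  have hsum : ∑ j ∈ range (n + 1), cqWeight (-α) (n - j) ≤ exp α * (n : ℝ) ^ α := by
    have hreflect := sum_range_reflect (fun k => cqWeight (-α) k) (n + 1)
    simp only [add_tsub_cancel_right] at hreflect
    rw [hreflect]
    exact sum_range_cqWeight_neg_le hα0.le hn
  have hQ : 0 ≤ ∑ j ∈ range (n + 1), cqWeight (-α) (n - j) * ‖w j‖ ^ 2 :=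
    sum_nonneg fun j hj => mul_nonneg (ha j hj) (sq_nonneg _)
  calc ‖τ ^ α • ∑ j ∈ range (n + 1), cqWeight (-α) (n - j) • w j‖ ^ 2
      = (τ ^ α) ^ 2 * ‖∑ j ∈ range (n + 1), cqWeight (-α) (n - j) • w j‖ ^ 2 := by
        rw [norm_smul, norm_of_nonneg (by positivity), mul_pow]
    _ ≤ (τ ^ α) ^ 2 * ((∑ j ∈ range (n + 1), cqWeight (-α) (n - j)) *
          ∑ j ∈ range (n + 1), cqWeight (-α) (n - j) * ‖w j‖ ^ 2) := by
        gcongr; exact norm_sum_smul_sq_le ha w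
    _ ≤ (τ ^ α) ^ 2 * (exp α * (n : ℝ) ^ α *
          ∑ j ∈ range (n + 1), cqWeight (-α) (n - j) * ‖w j‖ ^ 2) := by gcongr
    _ = exp α * ((n : ℝ) * τ) ^ α *
          (τ ^ α * ∑ j ∈ range (n + 1), cqWeight (-α) (n - j) * ‖w j‖ ^ 2) := by
        rw [mul_rpow (by positivity) hτ.le]; ring

/-- Discrete Cauchy–Schwarz bound for the convolution quadrature fractional integral
`(∂_τ^{-α} w)^n = τ^α Σ_{j=0}^n a_{n-j}^{(-α)} w_j`:
`‖(∂_τ^{-α} w)^n‖² ≤ C (nτ)^α (∂_τ^{-α} ‖w‖²)^n`, with `C` depending only on `α`. -/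
theorem stmt16 (α : ℝ) (hα0 : 0 < α) (hα1 : α < 1) :
    ∃ C > 0, ∀ (H : Type) [NormedAddCommGroup H] [InnerProductSpace ℝ H],
      ∀ τ : ℝ, 0 < τ → ∀ n : ℕ, 1 ≤ n → ∀ w : ℕ → H,
        ‖τ ^ α • ∑ j ∈ Finset.range (n + 1), cqWeight (-α) (n - j) • w j‖ ^ 2 ≤
          C * ((n : ℝ) * τ) ^ α *
            (τ ^ α * ∑ j ∈ Finset.range (n + 1), cqWeight (-α) (n - j) * ‖w j‖ ^ 2) :=
  stmt16_general α hα0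
end
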